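/- Let rho = (rho_1,...,rho_h) be an h-tuple of finite sequences of Reeb chords of the torus algebra, let m >= 1, let tau be an m-splicing of rho, and let k be an index with 0 < k < m+1. Suppose there exists an interleaving sigma_0 of rho (i.e. an (m+1)-splicing with Col(sigma_0) = 0) for which k is collidable and sigma_0(k) = tau. Then there are exactly two interleavings sigma of rho such that k is collidable for sigma and sigma(k) = tau. -/

import Mathlib

/-! ## The torus algebra -/

/-- The two idempotents of the torus algebra. -/
inductive Idem : Type
  | m | l
deriving DecidableEq

/-- Reeb chords of the torus algebra. -/
inductive Chord : Type
  | r1 | r2 | r3 | r12 | r23 | r123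
deriving DecidableEq

open Chord

/-- The idempotent `ι` with `ι * ρ = ρ`. -/
def iotaStart : Chord → Idem
  | r1 => Idem.m | r2 => Idem.l | r3 => Idem.m
  | r12 => Idem.m | r23 => Idem.l | r123 => Idem.m

/-- The idempotent `ι` with `ρ * ι = ρ`. -/
def iotaEnd : Chord → Idem
  | r1 => Idem.l | r2 => Idem.m | r3 => Idem.l
  | r12 => Idem.m | r23 => Idem.l | r123 => Idem.l

/-- A chord is jumping if its starting and ending idempotents differ. -/
def Jumping (c : Chord) : Prop := iotaStart c ≠ iotaEnd c

instance (c : Chord) : Decidable (Jumping c) := by unfold Jumping; infer_instance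

/-- The subsequence of jumping chords of a sequence of Reeb chords. -/
def jumpList (l : List Chord) : List Chord := l.filter (fun c => decide (Jumping c))

/-- The number of jumping chords of a sequence. -/
abbrev numJumps (l : List Chord) : ℕ := (jumpList l).length

/-! ## Splicings

An `m`-splicing of an `h`-tuple `ρ` of finite sequences of Reeb chords is, for each `j`, an
ordered partition of `jump (ρ j)` into `m` possibly empty parts, each of size at most one,
such that every part-column is nonempty for at least one `j`.  Since the entries of
`jump (ρ j)` are distributed among the parts in order and each part has at most one element,
such a partition is the same as a strictly monotone function sending the position of each
jumping chord to the (0-based) index of the column containing it. -/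
def Splicing (h : ℕ) (ρ : Fin h → List Chord) (m : ℕ) : Type :=
  { p : (j : Fin h) → Fin (numJumps (ρ j)) → Fin m //
      (∀ (j : Fin h) (s t : Fin (numJumps (ρ j))), s < t → p j s < p j t) ∧
      (∀ i : Fin m, ∃ (j : Fin h) (s : Fin (numJumps (ρ j))), p j s = i) }

instance (h : ℕ) (ρ : Fin h → List Chord) (m : ℕ) : Finite (Splicing h ρ m) := by
  unfold Splicing; infer_instance

noncomputable instance (h : ℕ) (ρ : Fin h → List Chord) (m : ℕ) : Fintype (Splicing h ρ m) :=
  Fintype.ofFinite _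

/-- A splicing is an interleaving if `Col σ = 0`, i.e. no column receives jumping chords
from more than one of the sequences. -/
def IsInterleaving {h m : ℕ} {ρ : Fin h → List Chord} (σ : Splicing h ρ m) : Prop :=
  ∀ i : Fin m, ¬ ∃ j₁ j₂ : Fin h, j₁ ≠ j₂ ∧
    (∃ s, σ.1 j₁ s = i) ∧ (∃ s, σ.1 j₂ s = i)

/-- `IsCollision σ k τ` says that the (0-based) index `k` is collidable for `σ` (columns `k`
and `k+1` exist, and for every `j` at most one of them contains a chord of `jump (ρ j)`) and
that `τ` is the collision `σ(k)`, i.e. the splicing obtained from `σ` by amalgamating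
columns `k` and `k+1`. -/
def IsCollision {h m m' : ℕ} {ρ : Fin h → List Chord}
    (σ : Splicing h ρ m) (k : ℕ) (τ : Splicing h ρ m') : Prop :=
  m = m' + 1 ∧ k + 1 < m ∧
  (∀ j : Fin h, ¬ ((∃ s, (σ.1 j s : ℕ) = k) ∧ (∃ s, (σ.1 j s : ℕ) = k + 1))) ∧
  (∀ (j : Fin h) (s : Fin (numJumps (ρ j))),
    (τ.1 j s : ℕ) = if (σ.1 j s : ℕ) ≤ k then (σ.1 j s : ℕ) else (σ.1 j s : ℕ) - 1)

/-!
In an interleaving every column holds exactly one jumping chord, and collapsing the columns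
`k` and `k + 1` is injective away from them. Hence an interleaving `σ` with `σ(k) = τ` is
determined by `τ` except for which of the two chords merged into column `k` of `τ` is sent to
column `k`. Both choices occur: one is `σ₀`, the other is `σ₀` with the columns `k` and `k + 1`
exchanged, which is still strictly monotone on every row because no row meets both columns.
-/

theorem CovBy.swap_lt_swap {β : Type*} [LinearOrder β] {a b u v : β} (hab : a ⋖ b)
    (huv : u < v) (h : ¬ (u = a ∧ v = b)) : Equiv.swap a b u < Equiv.swap a b v := by
  have hu : u ≤ a ∨ b ≤ u := (le_or_gt u a).imp_right hab.ge_of_gt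
  have hv : v ≤ a ∨ b ≤ v := (le_or_gt v a).imp_right hab.ge_of_gt
  have := hab.lt
  rw [Equiv.swap_apply_def, Equiv.swap_apply_def]
  split_ifs <;> grind

theorem StrictMono.swap_comp {α β : Type*} [Preorder α] [LinearOrder β] {f : α → β}
    (hf : StrictMono f) {a b : β} (hab : a ⋖ b) (hfab : ¬ (a ∈ Set.range f ∧ b ∈ Set.range f)) :
    StrictMono (Equiv.swap a b ∘ f) := fun x y hxy =>
  hab.swap_lt_swap (hf hxy) fun ⟨hx, hy⟩ => hfab ⟨⟨x, hx⟩, ⟨y, hy⟩⟩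

namespace Splicing

variable {h n : ℕ} {ρ : Fin h → List Chord}

theorem strictMono (σ : Splicing h ρ n) (j : Fin h) : StrictMono (σ.1 j) :=
  σ.2.1 j

def permCols (σ : Splicing h ρ n) (e : Equiv.Perm (Fin n))
    (he : ∀ j, StrictMono (e ∘ σ.1 j)) : Splicing h ρ n :=
  ⟨fun j => e ∘ σ.1 j, he, fun i => by
    obtain ⟨j, s, hs⟩ := σ.2.2 (e.symm i)
    exact ⟨j, s, by simp [hs]⟩⟩

end Splicing

section

variable {h n n' : ℕ} {ρ : Fin h → List Chord}

theorem IsInterleaving.injective {σ : Splicing h ρ n} (hσ : IsInterleaving σ) :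
    Function.Injective fun p : (j : Fin h) × Fin (numJumps (ρ j)) => σ.1 p.1 p.2 := by
  rintro ⟨j, s⟩ ⟨j', s'⟩ (he : σ.1 j s = σ.1 j' s')
  obtain rfl : j = j' := by
    by_contra hne
    exact hσ _ ⟨j, j', hne, ⟨s, rfl⟩, ⟨s', he.symm⟩⟩
  rw [(σ.strictMono j).injective he]

theorem IsInterleaving.permCols {σ : Splicing h ρ n} (hσ : IsInterleaving σ)
    (e : Equiv.Perm (Fin n)) (he : ∀ j, StrictMono (e ∘ σ.1 j)) :
    IsInterleaving (σ.permCols e he) := by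
  rintro i ⟨j₁, j₂, hne, ⟨s₁, h₁⟩, ⟨s₂, h₂⟩⟩
  exact hσ (e.symm i) ⟨j₁, j₂, hne, ⟨s₁, by simp [← h₁, Splicing.permCols]⟩,
    ⟨s₂, by simp [← h₂, Splicing.permCols]⟩⟩

namespace IsCollision

variable {σ σ' : Splicing h ρ n} {τ : Splicing h ρ n'} {k : ℕ}

theorem val_eq_iff (hc : IsCollision σ k τ) (j : Fin h) (s : Fin (numJumps (ρ j))) :
    (τ.1 j s : ℕ) = k ↔ (σ.1 j s : ℕ) = k ∨ (σ.1 j s : ℕ) = k + 1 := by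
  rw [hc.2.2.2 j s]
  split_ifs <;> omega

theorem apply_eq_of_val_ne (hc : IsCollision σ k τ) (hc' : IsCollision σ' k τ)
    {j : Fin h} {s : Fin (numJumps (ρ j))} (hτ : (τ.1 j s : ℕ) ≠ k) : σ.1 j s = σ'.1 j s := by
  have h₁ := hc.2.2.2 j s
  have h₂ := hc'.2.2.2 j s
  ext
  split_ifs at h₁ h₂ <;> omega

def swapCols (hc : IsCollision σ k τ) : Splicing h ρ n :=
  σ.permCols (Equiv.swap ⟨k, by have := hc.2.1; omega⟩ ⟨k + 1, hc.2.1⟩) fun j =>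
    (σ.strictMono j).swap_comp (Fin.covBy_iff.2 (Nat.covBy_iff_add_one_eq.2 rfl))
      fun ⟨⟨s, hs⟩, ⟨t, ht⟩⟩ => hc.2.2.1 j ⟨⟨s, by rw [hs]⟩, ⟨t, by rw [ht]⟩⟩

theorem val_swapCols (hc : IsCollision σ k τ) (j : Fin h) (s : Fin (numJumps (ρ j))) :
    (hc.swapCols.1 j s : ℕ) =
      if (σ.1 j s : ℕ) = k then k + 1 else if (σ.1 j s : ℕ) = k + 1 then k else σ.1 j s := by
  simp only [swapCols, Splicing.permCols, Function.comp_apply, Equiv.swap_apply_def,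
    Fin.ext_iff]
  split_ifs <;> simp_all

theorem isCollision_swapCols (hc : IsCollision σ k τ) : IsCollision hc.swapCols k τ := by
  refine ⟨hc.1, hc.2.1, fun j ⟨⟨s, hs⟩, ⟨t, ht⟩⟩ => hc.2.2.1 j ⟨⟨t, ?_⟩, ⟨s, ?_⟩⟩, fun j s => ?_⟩
  · rw [val_swapCols] at ht; split_ifs at ht <;> omega
  · rw [val_swapCols] at hs; split_ifs at hs <;> omega
  · rw [hc.2.2.2 j s, val_swapCols]; split_ifs <;> omega

end IsCollision

theorem IsInterleaving.eq_of_isCollision {σ σ' : Splicing h ρ n} {τ : Splicing h ρ n'} {k : ℕ}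
    (hσ : IsInterleaving σ) (hσ' : IsInterleaving σ')
    (hc : IsCollision σ k τ) (hc' : IsCollision σ' k τ)
    {j₀ : Fin h} {s₀ : Fin (numJumps (ρ j₀))} (h₀ : (τ.1 j₀ s₀ : ℕ) = k)
    (hagree : σ.1 j₀ s₀ = σ'.1 j₀ s₀) : σ = σ' := by
  apply Subtype.ext
  funext j s
  by_cases hτ : (τ.1 j s : ℕ) = k
  · by_cases hp : (⟨j, s⟩ : (j : Fin h) × Fin (numJumps (ρ j))) = ⟨j₀, s₀⟩
    · obtain ⟨rfl, rfl⟩ := Sigma.mk.inj_iff.mp hp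
      exact hagree
    · -- `(j, s)` and `(j₀, s₀)` are the two chords merged into column `k` of `τ`; each
      -- interleaving puts one in column `k` and the other in column `k + 1`.
      have hne : (σ.1 j s : ℕ) ≠ σ.1 j₀ s₀ := Fin.val_ne_of_ne (hσ.injective.ne hp)
      have hne' : (σ'.1 j s : ℕ) ≠ σ'.1 j₀ s₀ := Fin.val_ne_of_ne (hσ'.injective.ne hp)
      have h₁ := (hc.val_eq_iff j s).1 hτ
      have h₁' := (hc'.val_eq_iff j s).1 hτ
      have h₂ := (hc.val_eq_iff j₀ s₀).1 h₀
      have h₂' := (hc'.val_eq_iff j₀ s₀).1 h₀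
      rw [hagree] at hne h₂
      ext
      omega
  · exact hc.apply_eq_of_val_ne hc' hτ

end

theorem two_interleavings_with_given_collision_general
    (h : ℕ) (ρ : Fin h → List Chord) (m : ℕ)
    (τ : Splicing h ρ m) (k : ℕ)
    (hex : ∃ σ₀ : Splicing h ρ (m + 1), IsInterleaving σ₀ ∧ IsCollision σ₀ k τ) :
    {σ : Splicing h ρ (m + 1) | IsInterleaving σ ∧ IsCollision σ k τ}.ncard = 2 := by
  obtain ⟨σ₀, hI, hC⟩ := hex
  obtain ⟨j₀, s₀, hs₀⟩ := σ₀.2.2 ⟨k, by have := hC.2.1; omega⟩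
  have hσ₀ : (σ₀.1 j₀ s₀ : ℕ) = k := by rw [hs₀]
  have hτ : (τ.1 j₀ s₀ : ℕ) = k := (hC.val_eq_iff j₀ s₀).2 (Or.inl hσ₀)
  have hσ₁ : (hC.swapCols.1 j₀ s₀ : ℕ) = k + 1 := by simp [hC.val_swapCols, hσ₀]
  have hne : σ₀ ≠ hC.swapCols := fun he => by rw [← he] at hσ₁; omega
  suffices {σ : Splicing h ρ (m + 1) | IsInterleaving σ ∧ IsCollision σ k τ} =
      {σ₀, hC.swapCols} by rw [this, Set.ncard_pair hne]
  ext σ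
  refine ⟨fun ⟨hIσ, hCσ⟩ => ?_, ?_⟩
  · rcases (hCσ.val_eq_iff j₀ s₀).1 hτ with hσ | hσ
    · exact Or.inl (hIσ.eq_of_isCollision hI hCσ hC hτ (Fin.ext (hσ.trans hσ₀.symm)))
    · exact Or.inr (hIσ.eq_of_isCollision (hI.permCols _ _) hCσ hC.isCollision_swapCols hτ
        (Fin.ext (hσ.trans hσ₁.symm)))
  · rintro (rfl | rfl)
    exacts [⟨hI, hC⟩, ⟨hI.permCols _ _, hC.isCollision_swapCols⟩]

/-- If some interleaving of `ρ` admits the `m`-splicing `τ` as its collision at the index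
`k`, then there are exactly two interleavings `σ` of `ρ` for which `k` is collidable and
whose collision at `k` is `τ`.  (Columns are indexed from `0`, so the paper's collidable
index `0 < k < m+1` for an `(m+1)`-splicing corresponds to `0 ≤ k < m` here.) -/
theorem two_interleavings_with_given_collision
    (h : ℕ) (hh : 1 ≤ h) (ρ : Fin h → List Chord) (m : ℕ) (hm : 1 ≤ m)
    (τ : Splicing h ρ m) (k : ℕ) (hk : k < m)
    (hex : ∃ σ₀ : Splicing h ρ (m + 1), IsInterleaving σ₀ ∧ IsCollision σ₀ k τ) :
    {σ : Splicing h ρ (m + 1) | IsInterleaving σ ∧ IsCollision σ k τ}.ncard = 2 :=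
  two_interleavings_with_given_collision_general h ρ m τ k hex
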